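/- Under the unconstrained symmetric Cournot equilibrium with linear prices, the total quantity traded at each time t by n stores is 2n/(n+1) times the quantity traded by a single monopolist store, and in particular exceeds the monopoly (cooperative) quantity for all n ≥ 2, while the total profit 4n/(n+1)² times monopoly profit converges to 0 as n → ∞. -/

import Mathlib

/-- `hfun ε x`: volume traded, `x` when buying, `ε x` when selling. -/
noncomputable def hfun (ε x : ℝ) : ℝ := if 0 ≤ x then x else ε * x

/-- The objective of the unconstrained symmetric `n`-store problem. -/
noncomputable def symObj (T n : ℕ) (pbar p' : ℕ → ℝ) (ε : ℝ) (x : ℕ → ℝ) : ℝ :=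
  ∑ t ∈ Finset.Icc 1 T,
    (pbar t * hfun ε (x t) + ((n : ℝ) + 1) / 2 * p' t * (hfun ε (x t)) ^ 2)

/-!
Scaling a trade plan by `2/(n+1)` turns the single-store objective into the `n`-store one, since
its linear and quadratic terms are positively homogeneous of degrees one and two while the
quadratic coefficient grows from `1` to `(n+1)/2`. Hence `2/(n+1)` times a monopoly optimum
minimises the `n`-store objective over cyclic plans. For `0 < ε ≤ 1` that objective is a sum of
strictly convex functions of the coordinates `x t`, so the minimiser is unique on `[1, T]`, and
`xf n = (2/(n+1)) • xf 1` there; the quantity and profit formulas follow.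
-/

open Filter Topology

lemma hfun_mul_of_nonneg (ε : ℝ) {l : ℝ} (hl : 0 ≤ l) (x : ℝ) : hfun ε (l * x) = l * hfun ε x := by
  rcases hl.eq_or_lt with rfl | hl
  · simp [hfun]
  · by_cases hx : 0 ≤ x
    · simp [hfun, hx, mul_nonneg hl.le hx]
    · simp [hfun, hx, not_le.2 (mul_neg_of_pos_of_neg hl (not_le.1 hx))]
      ring

lemma hfun_eq_max {ε : ℝ} (hε : ε ≤ 1) (x : ℝ) : hfun ε x = max x (ε * x) := by
  unfold hfun
  split_ifs with hx
  · exact (max_eq_left (by nlinarith)).symm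
  · exact (max_eq_right (by nlinarith)).symm

lemma convexOn_mul_left (c : ℝ) : ConvexOn ℝ Set.univ fun x : ℝ => c * x :=
  (LinearMap.mulLeft ℝ c).convexOn convex_univ

lemma convexOn_hfun {ε : ℝ} (hε : ε ≤ 1) : ConvexOn ℝ Set.univ (hfun ε) := by
  have h : hfun ε = (fun x => 1 * x) ⊔ fun x => ε * x := by
    ext x; simp [hfun_eq_max hε]
  rw [h]
  exact (convexOn_mul_left 1).sup (convexOn_mul_left ε)

lemma convexOn_max_mul_left_zero_sq (c : ℝ) :
    ConvexOn ℝ Set.univ fun x : ℝ => max (c * x) 0 ^ 2 :=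
  ((convexOn_mul_left c).sup (convexOn_const 0 convex_univ)).pow (fun _ _ => le_max_right _ _) 2

-- any `k` works; `k = min 1 ε²` makes the first coefficient positive and the others nonnegative
lemma hfun_sq_eq (ε k x : ℝ) :
    hfun ε x ^ 2 = k * x ^ 2 + (1 - k) * max x 0 ^ 2 + (ε ^ 2 - k) * max (-x) 0 ^ 2 := by
  by_cases hx : 0 ≤ x
  · simp [hfun, hx]; ring
  · simp [hfun, hx, (not_le.1 hx).le]; ring

lemma StrictConvexOn.const_mul {E : Type*} [AddCommGroup E] [Module ℝ E] {s : Set E} {f : E → ℝ}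
    {c : ℝ} (hc : 0 < c) (hf : StrictConvexOn ℝ s f) : StrictConvexOn ℝ s fun x => c * f x :=
  ⟨hf.1, fun x hx y hy hxy a b ha hb hab => by
    calc c * f (a • x + b • y) < c * (a • f x + b • f y) :=
          mul_lt_mul_of_pos_left (hf.2 hx hy hxy ha hb hab) hc
      _ = a • (c * f x) + b • (c * f y) := by simp only [smul_eq_mul]; ring⟩

lemma strictConvexOn_hfun_sq {ε : ℝ} (hε : ε ≠ 0) :
    StrictConvexOn ℝ Set.univ fun x => hfun ε x ^ 2 := by
  set k := min 1 (ε ^ 2)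
  have hk : 0 < k := lt_min one_pos (by positivity)
  have h : (fun x => hfun ε x ^ 2) = fun x => k * x ^ 2 + (1 - k) * max x 0 ^ 2 +
      (ε ^ 2 - k) * max (-x) 0 ^ 2 := funext (hfun_sq_eq ε k)
  have hpos : ConvexOn ℝ Set.univ fun x : ℝ => max x 0 ^ 2 := by
    simpa using convexOn_max_mul_left_zero_sq 1
  have hneg : ConvexOn ℝ Set.univ fun x : ℝ => max (-x) 0 ^ 2 := by
    simpa using convexOn_max_mul_left_zero_sq (-1)
  rw [h]
  refine (((Even.strictConvexOn_pow even_two two_ne_zero).const_mul hk).add_convexOn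
    (hpos.smul ?_)).add_convexOn (hneg.smul ?_)
  · exact sub_nonneg.2 (min_le_left _ _)
  · exact sub_nonneg.2 (min_le_right _ _)

lemma strictConvexOn_trade_cost {ε a b : ℝ} (hε0 : ε ≠ 0) (hε1 : ε ≤ 1) (ha : 0 ≤ a)
    (hb : 0 < b) :
    StrictConvexOn ℝ Set.univ fun x => a * hfun ε x + b * hfun ε x ^ 2 :=
  ((convexOn_hfun hε1).smul ha).add_strictConvexOn ((strictConvexOn_hfun_sq hε0).const_mul hb)

theorem Finset.eqOn_of_isMinOn_sum_strictConvexOn {ι : Type*} {s : Finset ι} {φ : ι → ℝ → ℝ}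
    (hφ : ∀ i ∈ s, StrictConvexOn ℝ Set.univ (φ i)) {C : Set (ι → ℝ)} (hC : Convex ℝ C)
    {x y : ι → ℝ} (hxC : x ∈ C) (hyC : y ∈ C)
    (hx : IsMinOn (fun z => ∑ i ∈ s, φ i (z i)) C x)
    (hy : IsMinOn (fun z => ∑ i ∈ s, φ i (z i)) C y) :
    ∀ i ∈ s, x i = y i := by
  by_contra! ⟨i, hi, hne⟩
  set F := fun z : ι → ℝ => ∑ i ∈ s, φ i (z i)
  have hmid : (1 / 2 : ℝ) • x + (1 / 2 : ℝ) • y ∈ C :=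
    hC hxC hyC (by norm_num) (by norm_num) (by norm_num)
  have hlt : F ((1 / 2 : ℝ) • x + (1 / 2 : ℝ) • y) < (1 / 2 : ℝ) • F x + (1 / 2 : ℝ) • F y := by
    simp only [F, smul_eq_mul, Finset.mul_sum, ← Finset.sum_add_distrib]
    refine Finset.sum_lt_sum (fun j hj => ?_) ⟨i, hi, ?_⟩
    · exact (hφ j hj).convexOn.2 trivial trivial (by norm_num) (by norm_num) (by norm_num)
    · exact (hφ i hi).2 trivial trivial hne (by norm_num) (by norm_num) (by norm_num)
  have h1 := isMinOn_iff.1 hx _ hmid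
  have h2 := isMinOn_iff.1 hy _ hxC
  simp only [smul_eq_mul] at hlt
  linarith

def cyclicPlans (T : ℕ) : Submodule ℝ (ℕ → ℝ) :=
  LinearMap.ker (∑ t ∈ Finset.Icc 1 T, LinearMap.proj t)

lemma mem_cyclicPlans {T : ℕ} {y : ℕ → ℝ} : y ∈ cyclicPlans T ↔ ∑ t ∈ Finset.Icc 1 T, y t = 0 := by
  simp [cyclicPlans]

lemma symObj_two_div_succ_smul (T n : ℕ) (pbar p' : ℕ → ℝ) (ε : ℝ) (x : ℕ → ℝ) :
    symObj T n pbar p' ε ((2 / ((n : ℝ) + 1)) • x) =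
      2 / ((n : ℝ) + 1) * symObj T 1 pbar p' ε x := by
  unfold symObj
  rw [Finset.mul_sum]
  refine Finset.sum_congr rfl fun t _ => ?_
  rw [Pi.smul_apply, smul_eq_mul, hfun_mul_of_nonneg ε (by positivity)]
  field_simp
  push_cast
  ring

theorem eqOn_two_div_succ_smul_of_isMinOn_symObj {T n : ℕ} {pbar p' : ℕ → ℝ}
    (hpbar : ∀ t ∈ Finset.Icc 1 T, 0 ≤ pbar t) (hp' : ∀ t ∈ Finset.Icc 1 T, 0 < p' t)
    {ε : ℝ} (hε0 : ε ≠ 0) (hε1 : ε ≤ 1) {x₁ xₙ : ℕ → ℝ}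
    (hx₁C : x₁ ∈ cyclicPlans T) (hx₁ : IsMinOn (symObj T 1 pbar p' ε) (cyclicPlans T) x₁)
    (hxₙC : xₙ ∈ cyclicPlans T) (hxₙ : IsMinOn (symObj T n pbar p' ε) (cyclicPlans T) xₙ) :
    ∀ t ∈ Finset.Icc 1 T, xₙ t = 2 / ((n : ℝ) + 1) * x₁ t := by
  set l : ℝ := 2 / ((n : ℝ) + 1)
  have hl : 0 < l := by positivity
  have hscaled : IsMinOn (symObj T n pbar p' ε) (cyclicPlans T) (l • x₁) := by
    refine isMinOn_iff.2 fun y hy => ?_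
    calc symObj T n pbar p' ε (l • x₁) = l * symObj T 1 pbar p' ε x₁ :=
          symObj_two_div_succ_smul ..
      _ ≤ l * symObj T 1 pbar p' ε (l⁻¹ • y) :=
          mul_le_mul_of_nonneg_left (hx₁ ((cyclicPlans T).smul_mem _ hy)) hl.le
      _ = symObj T n pbar p' ε y := by
          rw [← symObj_two_div_succ_smul, smul_inv_smul₀ hl.ne']
  refine Finset.eqOn_of_isMinOn_sum_strictConvexOn
    (φ := fun t u => pbar t * hfun ε u + ((n : ℝ) + 1) / 2 * p' t * hfun ε u ^ 2)
    (fun t ht => ?_) (cyclicPlans T).convex hxₙC ((cyclicPlans T).smul_mem l hx₁C) hxₙ hscaled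
  exact strictConvexOn_trade_cost hε0 hε1 (hpbar t ht) (by have := hp' t ht; positivity)

lemma one_lt_two_mul_div_succ {n : ℕ} (hn : 2 ≤ n) : 1 < 2 * (n : ℝ) / (n + 1) := by
  have hn2 : (2 : ℝ) ≤ n := by exact_mod_cast hn
  rw [one_lt_div (by positivity)]
  linarith

lemma tendsto_four_mul_div_succ_sq :
    Tendsto (fun n : ℕ => 4 * (n : ℝ) / ((n : ℝ) + 1) ^ 2) atTop (𝓝 0) := by
  have h := (tendsto_one_div_add_atTop_nhds_zero_nat.const_mul (4 : ℝ)).mul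
    (tendsto_natCast_div_add_atTop (1 : ℝ))
  rw [mul_zero, zero_mul] at h
  refine h.congr fun n => ?_
  field_simp

lemma sum_mul_hfun_sq_mul {s : Finset ℕ} (p' x : ℕ → ℝ) (ε : ℝ) {l : ℝ} (hl : 0 ≤ l) :
    ∑ t ∈ s, p' t * hfun ε (l * x t) ^ 2 = l ^ 2 * ∑ t ∈ s, p' t * hfun ε (x t) ^ 2 := by
  rw [Finset.mul_sum]
  refine Finset.sum_congr rfl fun t _ => ?_
  rw [hfun_mul_of_nonneg ε hl]
  ring

theorem stmt18_general (T : ℕ) (pbar p' : ℕ → ℝ)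
    (hpbar : ∀ t, 1 ≤ t → t ≤ T → 0 < pbar t) (hp' : ∀ t, 1 ≤ t → t ≤ T → 0 < p' t)
    (ε : ℝ) (hε0 : 0 < ε) (hε1 : ε ≤ 1)
    (xf : ℕ → ℕ → ℝ)
    (hcyc : ∀ n : ℕ, 1 ≤ n → ∑ t ∈ Finset.Icc 1 T, xf n t = 0)
    (hmin : ∀ n : ℕ, 1 ≤ n → ∀ y : ℕ → ℝ, (∑ t ∈ Finset.Icc 1 T, y t = 0) →
      symObj T n pbar p' ε (xf n) ≤ symObj T n pbar p' ε y) :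
    -- total traded quantity is 2n/(n+1) times the monopoly quantity
    (∀ n : ℕ, 1 ≤ n → ∀ t, 1 ≤ t → t ≤ T →
      (n : ℝ) * xf n t = (2 * (n : ℝ) / ((n : ℝ) + 1)) * xf 1 t) ∧
    -- the total traded quantity strictly exceeds the monopoly quantity for n ≥ 2
    (∀ n : ℕ, 2 ≤ n → ∀ t, 1 ≤ t → t ≤ T → xf 1 t ≠ 0 →
      |xf 1 t| < |(n : ℝ) * xf n t|) ∧
    -- total profit equals 4n/(n+1)² times the monopoly profit
    (∀ n : ℕ, 1 ≤ n →
      (n : ℝ) * ∑ t ∈ Finset.Icc 1 T, p' t * (hfun ε (xf n t)) ^ 2 =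
        (4 * (n : ℝ) / ((n : ℝ) + 1) ^ 2) *
          ∑ t ∈ Finset.Icc 1 T, p' t * (hfun ε (xf 1 t)) ^ 2) ∧
    -- and the total profit tends to 0 as n → ∞
    Filter.Tendsto
      (fun n : ℕ => (n : ℝ) * ∑ t ∈ Finset.Icc 1 T, p' t * (hfun ε (xf n t)) ^ 2)
      Filter.atTop (nhds 0) := by
  have hmin' : ∀ n, 1 ≤ n → IsMinOn (symObj T n pbar p' ε) (cyclicPlans T) (xf n) :=
    fun n hn => isMinOn_iff.2 fun y hy => hmin n hn y (mem_cyclicPlans.1 hy)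
  have hxf : ∀ n, 1 ≤ n → ∀ t ∈ Finset.Icc 1 T, xf n t = 2 / ((n : ℝ) + 1) * xf 1 t := fun n hn =>
    eqOn_two_div_succ_smul_of_isMinOn_symObj
      (fun t ht => (hpbar t (Finset.mem_Icc.1 ht).1 (Finset.mem_Icc.1 ht).2).le)
      (fun t ht => hp' t (Finset.mem_Icc.1 ht).1 (Finset.mem_Icc.1 ht).2) hε0.ne' hε1
      (mem_cyclicPlans.2 (hcyc 1 le_rfl)) (hmin' 1 le_rfl)
      (mem_cyclicPlans.2 (hcyc n hn)) (hmin' n hn)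
  have hquantity : ∀ n : ℕ, 1 ≤ n → ∀ t, 1 ≤ t → t ≤ T →
      (n : ℝ) * xf n t = (2 * (n : ℝ) / ((n : ℝ) + 1)) * xf 1 t := fun n hn t ht1 htT => by
    rw [hxf n hn t (Finset.mem_Icc.2 ⟨ht1, htT⟩)]
    ring
  have hprofit : ∀ n : ℕ, 1 ≤ n →
      (n : ℝ) * ∑ t ∈ Finset.Icc 1 T, p' t * (hfun ε (xf n t)) ^ 2 =
        (4 * (n : ℝ) / ((n : ℝ) + 1) ^ 2) *
          ∑ t ∈ Finset.Icc 1 T, p' t * (hfun ε (xf 1 t)) ^ 2 := fun n hn => by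
    rw [Finset.sum_congr rfl fun t ht => by rw [hxf n hn t ht],
      sum_mul_hfun_sq_mul _ _ _ (by positivity)]
    field_simp
    ring
  refine ⟨hquantity, fun n hn t ht1 htT hx => ?_, hprofit, ?_⟩
  · rw [hquantity n (by omega) t ht1 htT, abs_mul,
      abs_of_pos (by positivity : (0 : ℝ) < 2 * n / (n + 1))]
    exact lt_mul_left (abs_pos.2 hx) (one_lt_two_mul_div_succ hn)
  · have h := tendsto_four_mul_div_succ_sq.mul_const
      (∑ t ∈ Finset.Icc 1 T, p' t * (hfun ε (xf 1 t)) ^ 2)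
    rw [zero_mul] at h
    refine h.congr' ?_
    filter_upwards [eventually_ge_atTop 1] with n hn
    exact (hprofit n hn).symm

/-- at the unconstrained symmetric Cournot equilibrium with
linear prices, the total quantity traded at each time by `n` stores is
`2n/(n+1)` times the single-store (monopoly) quantity — in particular it
exceeds the monopoly quantity in magnitude for `n ≥ 2` whenever the monopoly
quantity is nonzero — while the total profit, `4n/(n+1)²` times the monopoly
profit, converges to `0` as `n → ∞`. -/
theorem stmt18 (T : ℕ) (hT : 1 ≤ T) (pbar p' : ℕ → ℝ)
    (hpbar : ∀ t, 1 ≤ t → t ≤ T → 0 < pbar t) (hp' : ∀ t, 1 ≤ t → t ≤ T → 0 < p' t)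
    (ε : ℝ) (hε0 : 0 < ε) (hε1 : ε ≤ 1)
    (xf : ℕ → ℕ → ℝ)
    (hcyc : ∀ n : ℕ, 1 ≤ n → ∑ t ∈ Finset.Icc 1 T, xf n t = 0)
    (hmin : ∀ n : ℕ, 1 ≤ n → ∀ y : ℕ → ℝ, (∑ t ∈ Finset.Icc 1 T, y t = 0) →
      symObj T n pbar p' ε (xf n) ≤ symObj T n pbar p' ε y) :
    -- total traded quantity is 2n/(n+1) times the monopoly quantity
    (∀ n : ℕ, 1 ≤ n → ∀ t, 1 ≤ t → t ≤ T →
      (n : ℝ) * xf n t = (2 * (n : ℝ) / ((n : ℝ) + 1)) * xf 1 t) ∧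
    -- the total traded quantity strictly exceeds the monopoly quantity for n ≥ 2
    (∀ n : ℕ, 2 ≤ n → ∀ t, 1 ≤ t → t ≤ T → xf 1 t ≠ 0 →
      |xf 1 t| < |(n : ℝ) * xf n t|) ∧
    -- total profit equals 4n/(n+1)² times the monopoly profit
    (∀ n : ℕ, 1 ≤ n →
      (n : ℝ) * ∑ t ∈ Finset.Icc 1 T, p' t * (hfun ε (xf n t)) ^ 2 =
        (4 * (n : ℝ) / ((n : ℝ) + 1) ^ 2) *
          ∑ t ∈ Finset.Icc 1 T, p' t * (hfun ε (xf 1 t)) ^ 2) ∧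
    -- and the total profit tends to 0 as n → ∞
    Filter.Tendsto
      (fun n : ℕ => (n : ℝ) * ∑ t ∈ Finset.Icc 1 T, p' t * (hfun ε (xf n t)) ^ 2)
      Filter.atTop (nhds 0) :=
  stmt18_general T pbar p' hpbar hp' ε hε0 hε1 xf hcyc hmin
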